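/- Fix b > 0 with r := 1/(2b) ∉ ℕ, set n := ⌊r⌋ + 1 and ρ := r − ⌊r⌋ ∈ (0,1). Let m̂_1,…,m̂_{n+1} > 0 with Σ_{j=1}^{n+1} m̂_j = 1 and m̄_1,…,m̄_n > 0 with Σ_{j=1}^{n} m̄_j = 1. Let p_Y : [−b, 1+b] → ℝ be the piecewise constant function with p_Y(y) = r·m̂_j for y ∈ [(2j−3)/(2r), (2j−3+2ρ)/(2r)), j = 1,…,n+1, and p_Y(y) = r·m̄_j for y ∈ [(2j−3+2ρ)/(2r), (2j−1)/(2r)), j = 1,…,n. Then p_Y is a probability density on [−b, 1+b] and −∫_{−b}^{1+b} p_Y(y) log p_Y(y) dy = −ρ·Σ_{j=1}^{n+1} m̂_j log m̂_j − (1−ρ)·Σ_{j=1}^{n} m̄_j log m̄_j + log(2b). Consequently, since the conditional differential entropy of the uniform noise equals log(2b), the corresponding mutual information equals ρ·H(m̂) + (1−ρ)·H(m̄), where H denotes the Shannon entropy of a finite probability vector. -/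

import Mathlib

open Set MeasureTheory

private lemma piece_eq {f : ℝ → ℝ} {u v C : ℝ}
    (h : ∀ y ∈ Set.Ico u v, f y = C) :
    f =ᵐ[volume.restrict (Set.Ioc u v)] fun _ => C := by
  rw [Filter.EventuallyEq, ae_restrict_iff' measurableSet_Ioc]
  filter_upwards [compl_mem_ae_iff.2 (measure_singleton v)] with y hy hyIoc
  exact h y ⟨hyIoc.1.le, lt_of_le_of_ne hyIoc.2 (by simpa using hy)⟩

private lemma piece_intble {f : ℝ → ℝ} {u v C : ℝ} (huv : u ≤ v)
    (h : ∀ y ∈ Set.Ico u v, f y = C) :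
    IntervalIntegrable f volume u v := by
  rw [intervalIntegrable_iff_integrableOn_Ioc_of_le huv]
  exact (integrableOn_const measure_Ioc_lt_top.ne enorm_ne_top).congr (piece_eq h).symm

private lemma piece_integral {f : ℝ → ℝ} {u v C : ℝ} (huv : u ≤ v)
    (h : ∀ y ∈ Set.Ico u v, f y = C) :
    ∫ y in u..v, f y = C * (v - u) := by
  rw [intervalIntegral.integral_of_le huv, integral_congr_ae (piece_eq h),
    setIntegral_const, measureReal_def, Real.volume_Ioc, smul_eq_mul,
    ENNReal.toReal_ofReal (sub_nonneg.2 huv)]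
  ring

private lemma sum_split (F : ℕ → ℝ) (N : ℕ) :
    ∑ i ∈ Finset.range (2*N+1), F i
      = ∑ k ∈ Finset.range (N+1), F (2*k) + ∑ k ∈ Finset.range N, F (2*k+1) := by
  induction N with
  | zero => simp
  | succ N ih =>
      have h1 : 2*(N+1)+1 = (2*N+1) + 1 + 1 := by ring
      rw [h1, Finset.sum_range_succ, Finset.sum_range_succ, ih,
        Finset.sum_range_succ (fun k => F (2*k)) (N+1),
        Finset.sum_range_succ (fun k => F (2*k+1)) N]
      have e1 : 2*(N+1) = 2*N+1+1 := by ring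
      rw [e1]; ring

private lemma icc_range (f : ℕ → ℝ) (N : ℕ) :
    ∑ j ∈ Finset.Icc 1 N, f j = ∑ k ∈ Finset.range N, f (k+1) := by
  rw [show Finset.Icc 1 N = Finset.Ico 1 (N+1) from (Finset.Ico_add_one_right_eq_Icc 1 N).symm, Finset.sum_Ico_eq_sum_range]
  simp only [Nat.add_sub_cancel]
  exact Finset.sum_congr rfl fun i _ => by rw [add_comm]
/-- In the non-integer case, the piecewise constant density with
odd-segment heights `r·m̂_j` (lengths `ρ/r`) and even-segment heights `r·m̄_j`
(lengths `(1−ρ)/r`) is a probability density on `[−b, 1+b]` whose differential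
entropy equals `ρ·H(m̂) + (1−ρ)·H(m̄) + log(2b)`; hence the corresponding mutual
information equals `ρ·H(m̂) + (1−ρ)·H(m̄)`. -/
theorem stmt18 (b r : ℝ) (hb : 0 < b) (hr : r = 1 / (2 * b))
    (hrnat : ¬ ∃ k : ℕ, r = (k : ℝ))
    (n : ℕ) (hn : n = ⌊r⌋₊ + 1) (ρ : ℝ) (hρ : ρ = r - (⌊r⌋₊ : ℝ))
    (mhat mbar : ℕ → ℝ)
    (hmhatpos : ∀ j ∈ Finset.Icc 1 (n + 1), 0 < mhat j)
    (hmhatsum : ∑ j ∈ Finset.Icc 1 (n + 1), mhat j = 1)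
    (hmbarpos : ∀ j ∈ Finset.Icc 1 n, 0 < mbar j)
    (hmbarsum : ∑ j ∈ Finset.Icc 1 n, mbar j = 1)
    (pY : ℝ → ℝ)
    (h1 : ∀ j ∈ Finset.Icc 1 (n + 1),
      ∀ y ∈ Ico ((2 * (j : ℝ) - 3) / (2 * r)) ((2 * (j : ℝ) - 3 + 2 * ρ) / (2 * r)),
        pY y = r * mhat j)
    (h2 : ∀ j ∈ Finset.Icc 1 n,
      ∀ y ∈ Ico ((2 * (j : ℝ) - 3 + 2 * ρ) / (2 * r)) ((2 * (j : ℝ) - 1) / (2 * r)),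
        pY y = r * mbar j) :
    (∫ y in (-b)..(1 + b), pY y) = 1 ∧
    (-∫ y in (-b)..(1 + b), pY y * Real.log (pY y))
      = -ρ * (∑ j ∈ Finset.Icc 1 (n + 1), mhat j * Real.log (mhat j))
        - (1 - ρ) * (∑ j ∈ Finset.Icc 1 n, mbar j * Real.log (mbar j))
        + Real.log (2 * b) ∧
    (-∫ y in (-b)..(1 + b), pY y * Real.log (pY y)) - Real.log (2 * b)
      = ρ * (-∑ j ∈ Finset.Icc 1 (n + 1), mhat j * Real.log (mhat j))
        + (1 - ρ) * (-∑ j ∈ Finset.Icc 1 n, mbar j * Real.log (mbar j)) := by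
  have hrpos : 0 < r := by rw [hr]; positivity
  have hrne : r ≠ 0 := hrpos.ne'
  have hfl : (⌊r⌋₊ : ℝ) ≤ r := Nat.floor_le hrpos.le
  have hρpos : 0 < ρ := by
    rcases lt_or_eq_of_le hfl with h | h
    · rw [hρ]; linarith
    · exact absurd ⟨⌊r⌋₊, h.symm⟩ hrnat
  have hρlt : ρ < 1 := by
    have := Nat.lt_floor_add_one r
    rw [hρ]; linarith
  set t : ℕ → ℝ := fun i =>
    if i % 2 = 0 then ((i:ℝ) - 1)/(2*r) else ((i:ℝ) - 2 + 2*ρ)/(2*r) with ht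
  have hteven : ∀ k : ℕ, t (2*k) = (2*(k:ℝ) - 1)/(2*r) := by
    intro k
    simp only [ht]
    rw [if_pos (by omega)]
    push_cast; ring
  have htodd : ∀ k : ℕ, t (2*k+1) = (2*(k:ℝ) - 1 + 2*ρ)/(2*r) := by
    intro k
    simp only [ht]
    rw [if_neg (by omega)]
    push_cast; ring
  have hgap1 : ∀ k : ℕ, t (2*k+1) - t (2*k) = ρ / r := by
    intro k; rw [hteven, htodd]; field_simp; ring
  have hgap2 : ∀ k : ℕ, t (2*k+2) - t (2*k+1) = (1-ρ) / r := by
    intro k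
    rw [show 2*k+2 = 2*(k+1) from by ring, hteven, htodd]
    push_cast; field_simp; ring
  have hle1 : ∀ k : ℕ, t (2*k) ≤ t (2*k+1) := by
    intro k
    have h0 : 0 < ρ / r := div_pos hρpos hrpos
    have := hgap1 k; linarith
  have hle2 : ∀ k : ℕ, t (2*k+1) ≤ t (2*k+2) := by
    intro k
    have h0 : 0 < (1-ρ) / r := div_pos (by linarith) hrpos
    have := hgap2 k; linarith
  have ht0 : t 0 = -b := by
    have : t 0 = ((0:ℝ) - 1)/(2*r) := by
      simp only [ht]; norm_num
    rw [this, hr]; field_simp; ring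
  have htop : t (2*n+1) = 1 + b := by
    rw [htodd]
    have hn' : (n:ℝ) = (⌊r⌋₊:ℝ) + 1 := by rw [hn]; push_cast; ring
    rw [hn', hρ, hr]
    field_simp
    ring
  -- constancy on pieces
  have heven : ∀ k, k ≤ n → ∀ y ∈ Set.Ico (t (2*k)) (t (2*k+1)), pY y = r * mhat (k+1) := by
    intro k hk y hy
    have e1 : (2*((k+1:ℕ):ℝ) - 3)/(2*r) = t (2*k) := by rw [hteven]; push_cast; ring
    have e2 : (2*((k+1:ℕ):ℝ) - 3 + 2*ρ)/(2*r) = t (2*k+1) := by rw [htodd]; push_cast; ring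
    exact h1 (k+1) (Finset.mem_Icc.2 ⟨by omega, by omega⟩) y (by rw [e1, e2]; exact hy)
  have hodd : ∀ k, k < n → ∀ y ∈ Set.Ico (t (2*k+1)) (t (2*k+2)), pY y = r * mbar (k+1) := by
    intro k hk y hy
    have e1 : (2*((k+1:ℕ):ℝ) - 3 + 2*ρ)/(2*r) = t (2*k+1) := by rw [htodd]; push_cast; ring
    have e2 : (2*((k+1:ℕ):ℝ) - 1)/(2*r) = t (2*k+2) := by
      rw [show 2*k+2 = 2*(k+1) from by ring, hteven]
    exact h2 (k+1) (Finset.mem_Icc.2 ⟨by omega, by omega⟩) y (by rw [e1, e2]; exact hy)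
  have heven2 : ∀ k, k ≤ n → ∀ y ∈ Set.Ico (t (2*k)) (t (2*k+1)),
      pY y * Real.log (pY y) = (r * mhat (k+1)) * Real.log (r * mhat (k+1)) := by
    intro k hk y hy; rw [heven k hk y hy]
  have hodd2 : ∀ k, k < n → ∀ y ∈ Set.Ico (t (2*k+1)) (t (2*k+2)),
      pY y * Real.log (pY y) = (r * mbar (k+1)) * Real.log (r * mbar (k+1)) := by
    intro k hk y hy; rw [hodd k hk y hy]
  -- splitting the interval integral
  have hsplit : ∀ f : ℝ → ℝ,
      (∀ k, k ≤ n → ∀ y ∈ Set.Ico (t (2*k)) (t (2*k+1)), f y = r * mhat (k+1) * Real.log 1) →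
      True := fun _ _ => trivial
  have key : ∀ (f : ℝ → ℝ) (Ce Co : ℕ → ℝ),
      (∀ k, k ≤ n → ∀ y ∈ Set.Ico (t (2*k)) (t (2*k+1)), f y = Ce k) →
      (∀ k, k < n → ∀ y ∈ Set.Ico (t (2*k+1)) (t (2*k+2)), f y = Co k) →
      (∫ y in (-b)..(1+b), f y)
        = ∑ k ∈ Finset.range (n+1), Ce k * (ρ / r)
          + ∑ k ∈ Finset.range n, Co k * ((1-ρ) / r) := by
    intro f Ce Co hfe hfo
    have hint : ∀ i, i < 2*n+1 → IntervalIntegrable f MeasureTheory.volume (t i) (t (i+1)) := by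
      intro i hi
      rcases Nat.even_or_odd' i with ⟨k, rfl | rfl⟩
      · exact piece_intble (hle1 k) (hfe k (by omega))
      · exact piece_intble (hle2 k) (hfo k (by omega))
    have h0 : (∫ y in (-b)..(1+b), f y)
        = ∑ i ∈ Finset.range (2*n+1), ∫ y in t i..t (i+1), f y := by
      rw [← ht0, ← htop]
      exact (intervalIntegral.sum_integral_adjacent_intervals hint).symm
    rw [h0, sum_split (fun i => ∫ y in t i..t (i+1), f y) n]
    congr 1
    · refine Finset.sum_congr rfl fun k hk => ?_
      have hk' : k < n + 1 := Finset.mem_range.1 hk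
      rw [piece_integral (hle1 k) (hfe k (by omega)), hgap1 k]
    · refine Finset.sum_congr rfl fun k hk => ?_
      have hk' : k < n := Finset.mem_range.1 hk
      rw [show 2*k+1+1 = 2*k+2 from rfl, piece_integral (hle2 k) (hfo k hk'), hgap2 k]
  -- first conjunct
  have c1 : (∫ y in (-b)..(1+b), pY y) = 1 := by
    rw [key pY (fun k => r * mhat (k+1)) (fun k => r * mbar (k+1)) heven hodd]
    have e1 : ∑ k ∈ Finset.range (n+1), r * mhat (k+1) * (ρ / r)
        = ρ * ∑ k ∈ Finset.range (n+1), mhat (k+1) := by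
      rw [Finset.mul_sum]
      refine Finset.sum_congr rfl fun k _ => ?_
      field_simp
    have e2 : ∑ k ∈ Finset.range n, r * mbar (k+1) * ((1-ρ) / r)
        = (1-ρ) * ∑ k ∈ Finset.range n, mbar (k+1) := by
      rw [Finset.mul_sum]
      refine Finset.sum_congr rfl fun k _ => ?_
      field_simp
    rw [e1, e2, ← icc_range mhat (n+1), ← icc_range mbar n, hmhatsum, hmbarsum]
    ring
  have hlogr : Real.log r = - Real.log (2*b) := by
    rw [hr, one_div, Real.log_inv]
  -- second integral
  have c2 : (∫ y in (-b)..(1+b), pY y * Real.log (pY y))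
      = Real.log r + ρ * (∑ j ∈ Finset.Icc 1 (n+1), mhat j * Real.log (mhat j))
        + (1-ρ) * (∑ j ∈ Finset.Icc 1 n, mbar j * Real.log (mbar j)) := by
    rw [key (fun y => pY y * Real.log (pY y))
        (fun k => (r * mhat (k+1)) * Real.log (r * mhat (k+1)))
        (fun k => (r * mbar (k+1)) * Real.log (r * mbar (k+1))) heven2 hodd2]
    have e1 : ∀ k ∈ Finset.range (n+1),
        (r * mhat (k+1)) * Real.log (r * mhat (k+1)) * (ρ / r)
          = ρ * Real.log r * mhat (k+1) + ρ * (mhat (k+1) * Real.log (mhat (k+1))) := by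
      intro k hk
      rw [Real.log_mul hrne (hmhatpos (k+1) (Finset.mem_Icc.2
        ⟨by omega, by have := Finset.mem_range.1 hk; omega⟩)).ne']
      field_simp
    have e2 : ∀ k ∈ Finset.range n,
        (r * mbar (k+1)) * Real.log (r * mbar (k+1)) * ((1-ρ) / r)
          = (1-ρ) * Real.log r * mbar (k+1) + (1-ρ) * (mbar (k+1) * Real.log (mbar (k+1))) := by
      intro k hk
      rw [Real.log_mul hrne (hmbarpos (k+1) (Finset.mem_Icc.2
        ⟨by omega, by have := Finset.mem_range.1 hk; omega⟩)).ne']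
      field_simp
    rw [Finset.sum_congr rfl e1, Finset.sum_congr rfl e2,
      Finset.sum_add_distrib, Finset.sum_add_distrib, ← Finset.mul_sum, ← Finset.mul_sum,
      ← Finset.mul_sum, ← Finset.mul_sum,
      ← icc_range mhat (n+1), ← icc_range mbar n,
      ← icc_range (fun j => mhat j * Real.log (mhat j)) (n+1),
      ← icc_range (fun j => mbar j * Real.log (mbar j)) n,
      hmhatsum, hmbarsum]
    ring
  refine ⟨c1, ?_, ?_⟩
  · rw [c2]; rw [hlogr]; ring
  · rw [c2]; rw [hlogr]; ring
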